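/- With Ω the Cayley form on ℝ⁸ = ℝ⁴ × ℝ⁴, the matrix A = ((0,0,1),(0,1,0),(−1,0,0)), and Iᵅ, Îᵅ the standard anti-self-dual triples on the two ℝ⁴ factors, a skew-symmetric F satisfying the octonionic instanton equation F_{ab} = ½ Ω_{abcd} F_{cd} satisfies, for its components F_{ij} with both indices in the first factor: Iᵅ · F = ∑_β A_{αβ} (Îᵝ · F) for α = 1, 2, 3, where Iᵅ · F = ∑_{i,j∈{1,…,4}} Iᵅ_{ij} F_{ij} and Îᵝ · F = ∑_{m,n∈{5,…,8}} Îᵝ_{mn} F_{mn}. -/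

import Mathlib

/-!
Contracting the generalised Kronecker deltas, `∑ c d, Ω_{abcd} F_{cd}` for `a = 0` and
`b = 1, 2, 3` (indices of `Fin 8`) picks up only the terms `e⁰¹²³` and `e^{0b} ∧ e^{mn}` of `Ω`.
For skew `F` the instanton equation at these three pairs therefore reads
`F₀₁ − F₂₃ = F₄₇ − F₅₆`, `F₀₂ + F₁₃ = F₄₆ + F₅₇` and `F₀₃ − F₁₂ = F₆₇ − F₄₅`,
which are, up to the factor `2`, the three components of `Iᵅ · F = ∑_β A_{αβ} Îᵝ · F`.
-/

open Matrix

/-- Kronecker delta on `Fin 8`. -/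
noncomputable def kdelta (a b : Fin 8) : ℝ := if a = b then 1 else 0

/-- The generalised Kronecker delta `δ^{p₁…p₄}_{q₁…q₄}`. -/
noncomputable def gdelta (p q : Fin 4 → Fin 8) : ℝ :=
  Matrix.det (fun i j => kdelta (p i) (q j))

/-- The fully antisymmetric components `Ω_{abcd}` of the Cayley 4-form. -/
noncomputable def Omega4 (a b c d : Fin 8) : ℝ :=
  gdelta ![0, 1, 2, 3] ![a, b, c, d] + gdelta ![0, 1, 4, 7] ![a, b, c, d] -
    gdelta ![0, 1, 5, 6] ![a, b, c, d] + gdelta ![0, 2, 4, 6] ![a, b, c, d] +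
    gdelta ![0, 2, 5, 7] ![a, b, c, d] - gdelta ![0, 3, 4, 5] ![a, b, c, d] +
    gdelta ![0, 3, 6, 7] ![a, b, c, d] + gdelta ![1, 2, 4, 5] ![a, b, c, d] -
    gdelta ![1, 2, 6, 7] ![a, b, c, d] + gdelta ![1, 3, 4, 6] ![a, b, c, d] +
    gdelta ![1, 3, 5, 7] ![a, b, c, d] - gdelta ![2, 3, 4, 7] ![a, b, c, d] +
    gdelta ![2, 3, 5, 6] ![a, b, c, d] + gdelta ![4, 5, 6, 7] ![a, b, c, d]

/-- Components of `I¹ = e¹∧e² − e³∧e⁴`, `I² = e¹∧e³ + e²∧e⁴`,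
`I³ = e¹∧e⁴ − e²∧e³` on `ℝ⁴`. -/
noncomputable def Iquat : Fin 3 → Matrix (Fin 4) (Fin 4) ℝ :=
  ![!![0, 1, 0, 0; -1, 0, 0, 0; 0, 0, 0, -1; 0, 0, 1, 0],
    !![0, 0, 1, 0; 0, 0, 0, 1; -1, 0, 0, 0; 0, -1, 0, 0],
    !![0, 0, 0, 1; 0, 0, -1, 0; 0, 1, 0, 0; -1, 0, 0, 0]]

/-- Embed a 4×4 matrix as an 8×8 matrix supported on the first block
(indices 1–4). -/
noncomputable def pad1 (M : Matrix (Fin 4) (Fin 4) ℝ) : Matrix (Fin 8) (Fin 8) ℝ :=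
  fun a b =>
    if h : a.val < 4 ∧ b.val < 4 then M ⟨a.val, h.1⟩ ⟨b.val, h.2⟩ else 0

/-- Embed a 4×4 matrix as an 8×8 matrix supported on the second block
(indices 5–8). -/
noncomputable def pad2 (M : Matrix (Fin 4) (Fin 4) ℝ) : Matrix (Fin 8) (Fin 8) ℝ :=
  fun a b =>
    if h : 4 ≤ a.val ∧ 4 ≤ b.val then
      M ⟨a.val - 4, by omega⟩ ⟨b.val - 4, by omega⟩ else 0

/-- The anti-self-dual triple `Iᵅ` on the first `ℝ⁴` factor of `ℝ⁸`. -/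
noncomputable def I8 (α : Fin 3) : Matrix (Fin 8) (Fin 8) ℝ := pad1 (Iquat α)

/-- The anti-self-dual triple `Îᵅ` on the second `ℝ⁴` factor of `ℝ⁸`. -/
noncomputable def J8 (α : Fin 3) : Matrix (Fin 8) (Fin 8) ℝ := pad2 (Iquat α)

/-- The `SO(3)` matrix `A = ((0,0,1),(0,1,0),(−1,0,0))`. -/
noncomputable def Amat : Matrix (Fin 3) (Fin 3) ℝ := !![0, 0, 1; 0, 1, 0; -1, 0, 0]

lemma gdelta_eq_det_of (p q : Fin 4 → Fin 8) :
    gdelta p q = det (of fun i j => kdelta (p i) (q j)) :=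
  rfl

lemma sum_gdelta_mul (p0 p1 p2 p3 a b : Fin 8) (F : Matrix (Fin 8) (Fin 8) ℝ) :
    ∑ c, ∑ d, gdelta ![p0, p1, p2, p3] ![a, b, c, d] * F c d =
      (kdelta p0 a * kdelta p1 b - kdelta p1 a * kdelta p0 b) * (F p2 p3 - F p3 p2)
      - (kdelta p0 a * kdelta p2 b - kdelta p2 a * kdelta p0 b) * (F p1 p3 - F p3 p1)
      + (kdelta p0 a * kdelta p3 b - kdelta p3 a * kdelta p0 b) * (F p1 p2 - F p2 p1)
      + (kdelta p1 a * kdelta p2 b - kdelta p2 a * kdelta p1 b) * (F p0 p3 - F p3 p0)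
      - (kdelta p1 a * kdelta p3 b - kdelta p3 a * kdelta p1 b) * (F p0 p2 - F p2 p0)
      + (kdelta p2 a * kdelta p3 b - kdelta p3 a * kdelta p2 b) * (F p0 p1 - F p1 p0) := by
  simp only [gdelta_eq_det_of, det_succ_column _ (Fin.last 3), Fin.sum_univ_four, Fin.reduceLast,
    of_apply, det_fin_three, submatrix_apply, Fin.succAbove, Fin.lt_def, Fin.isValue,
    Fin.coe_ofNat_eq_mod, Nat.reduceMod, Nat.reduceLT, Fin.reduceSucc, Fin.reduceCastSucc,
    ↓reduceIte, cons_val_zero, cons_val_one, cons_val]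
  -- Freeze the deltas in `a, b` so that only those in the summation indices `c, d` get unfolded.
  generalize kdelta p0 a = a0, kdelta p1 a = a1, kdelta p2 a = a2, kdelta p3 a = a3,
    kdelta p0 b = b0, kdelta p1 b = b1, kdelta p2 b = b2, kdelta p3 b = b3
  simp only [kdelta, mul_add, add_mul, mul_sub, sub_mul, mul_ite, ite_mul, mul_one, mul_zero,
    one_mul, zero_mul, Finset.sum_add_distrib, Finset.sum_sub_distrib, Finset.sum_ite_irrel,
    Finset.sum_ite_eq, Finset.mem_univ, ↓reduceIte, Finset.sum_const_zero]
  ring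

lemma sum_Omega4_mul_zero_one (F : Matrix (Fin 8) (Fin 8) ℝ) :
    ∑ c, ∑ d, Omega4 0 1 c d * F c d = (F 2 3 - F 3 2) + (F 4 7 - F 7 4) - (F 5 6 - F 6 5) := by
  simp [Omega4, Finset.sum_add_distrib, Finset.sum_sub_distrib, add_mul, sub_mul, sum_gdelta_mul,
    kdelta]

lemma sum_Omega4_mul_zero_two (F : Matrix (Fin 8) (Fin 8) ℝ) :
    ∑ c, ∑ d, Omega4 0 2 c d * F c d =
      -(F 1 3 - F 3 1) + (F 4 6 - F 6 4) + (F 5 7 - F 7 5) := by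
  simp [Omega4, Finset.sum_add_distrib, Finset.sum_sub_distrib, add_mul, sub_mul, sum_gdelta_mul,
    kdelta]

lemma sum_Omega4_mul_zero_three (F : Matrix (Fin 8) (Fin 8) ℝ) :
    ∑ c, ∑ d, Omega4 0 3 c d * F c d = (F 1 2 - F 2 1) - (F 4 5 - F 5 4) + (F 6 7 - F 7 6) := by
  simp [Omega4, Finset.sum_add_distrib, Finset.sum_sub_distrib, add_mul, sub_mul, sum_gdelta_mul,
    kdelta]

lemma sum_pad1_mul (M : Matrix (Fin 4) (Fin 4) ℝ) (F : Matrix (Fin 8) (Fin 8) ℝ) :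
    ∑ a, ∑ b, pad1 M a b * F a b = ∑ i, ∑ j, M i j * F (Fin.castAdd 4 i) (Fin.castAdd 4 j) := by
  simp [Fin.sum_univ_add (a := 4) (b := 4), pad1]

lemma sum_pad2_mul (M : Matrix (Fin 4) (Fin 4) ℝ) (F : Matrix (Fin 8) (Fin 8) ℝ) :
    ∑ a, ∑ b, pad2 M a b * F a b = ∑ i, ∑ j, M i j * F (Fin.natAdd 4 i) (Fin.natAdd 4 j) := by
  simp [Fin.sum_univ_add (a := 4) (b := 4), pad2, show ∀ i : Fin 4, ¬ 4 ≤ (i : ℕ) by omega]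

lemma apply_swap_of_transpose_eq_neg {n R : Type*} [Neg R] {F : Matrix n n R} (h : Fᵀ = -F)
    (a b : n) : F b a = -F a b :=
  congrFun (congrFun h a) b

lemma first_block_eq_of_instanton {F : Matrix (Fin 8) (Fin 8) ℝ} (hskew : Fᵀ = -F)
    (hinst : ∀ a b, F a b = (1 / 2) * ∑ c, ∑ d, Omega4 a b c d * F c d) :
    F 0 1 - F 2 3 = F 4 7 - F 5 6 ∧ F 0 2 + F 1 3 = F 4 6 + F 5 7 ∧
      F 0 3 - F 1 2 = F 6 7 - F 4 5 := by
  have hF := apply_swap_of_transpose_eq_neg hskew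
  have h01 := hinst 0 1
  have h02 := hinst 0 2
  have h03 := hinst 0 3
  rw [sum_Omega4_mul_zero_one, hF 2 3, hF 4 7, hF 5 6] at h01
  rw [sum_Omega4_mul_zero_two, hF 1 3, hF 4 6, hF 5 7] at h02
  rw [sum_Omega4_mul_zero_three, hF 1 2, hF 4 5, hF 6 7] at h03
  refine ⟨?_, ?_, ?_⟩ <;> linarith

/-- A skew `F` satisfying the octonionic instanton equation
`F_{ab} = ½ Ω_{abcd} F_{cd}` satisfies `Iᵅ · F = ∑_β A_{αβ} (Îᵝ · F)`. -/
theorem stmt13 (F : Matrix (Fin 8) (Fin 8) ℝ) (hskew : Fᵀ = -F)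
    (hinst : ∀ a b, F a b = (1 / 2) * ∑ c, ∑ d, Omega4 a b c d * F c d) :
    ∀ α, ∑ i, ∑ j, I8 α i j * F i j =
      ∑ β, Amat α β * ∑ m, ∑ n, J8 β m n * F m n := by
  have hF := apply_swap_of_transpose_eq_neg hskew
  obtain ⟨h1, h2, h3⟩ := first_block_eq_of_instanton hskew hinst
  intro α
  simp only [I8, J8, sum_pad1_mul, sum_pad2_mul]
  fin_cases α <;>
    simp only [Iquat, Amat, Fin.sum_univ_four, Fin.sum_univ_three, of_apply, cons_val', cons_val_zero,
      cons_val_one, cons_val, cons_val_fin_one, Fin.reduceCastAdd, Fin.natAdd_eq_addNat,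
      Fin.reduceAddNat, Fin.isValue, Fin.zero_eta, Fin.mk_one, Fin.reduceFinMk] <;>
    linarith [hF 0 1, hF 0 2, hF 0 3, hF 1 2, hF 1 3, hF 2 3,
      hF 4 5, hF 4 6, hF 4 7, hF 5 6, hF 5 7, hF 6 7]
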